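/- Under the setting above (with ε0 < 1/2), for any α̂ ∈ R^k and any v ∈ range(U), it holds that ‖Û α̂ − v‖₂² ≤ ‖α̂ − Û^T v‖₂² + ‖v‖₂² · ε1². -/

import Mathlib

/-- Euclidean norm of a vector in `ℝ^n`. -/
noncomputable def vnorm {n : ℕ} (v : Fin n → ℝ) : ℝ := Real.sqrt (∑ i, v i ^ 2)

/-- The `j`-th largest singular value (1-indexed) of a real `m × n` matrix, via the
Courant–Fischer max-min characterization.  In particular `sval A 1` is the spectral
norm `‖A‖₂` and `sval A k` is `σ_k(A)`. -/
noncomputable def sval {m n : ℕ} (A : Matrix (Fin m) (Fin n) ℝ) (j : ℕ) : ℝ :=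
  sSup {c : ℝ | 0 ≤ c ∧ ∃ W : Submodule ℝ (Fin n → ℝ), Module.finrank ℝ W = j ∧
    ∀ v ∈ W, c * vnorm v ≤ vnorm (A.mulVec v)}

/-- `U` is an `m × k` matrix of orthonormal columns spanning a top-`k` left singular
subspace of `A`: its columns are orthonormal eigenvectors of `A Aᵀ` whose eigenvalues
are (at least) `σ_k(A)²`, i.e. belong to the `k` largest. -/
def IsTopSingular {m n k : ℕ} (A : Matrix (Fin m) (Fin n) ℝ)
    (U : Matrix (Fin m) (Fin k) ℝ) : Prop :=
  U.transpose * U = 1 ∧ ∃ D : Fin k → ℝ,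
    A * A.transpose * U = U * Matrix.diagonal D ∧ ∀ j, sval A k ^ 2 ≤ D j

/-!
Write `P̂ = 1 - Û Ûᵀ`. Since `Û α̂ - v = Û (α̂ - Ûᵀ v) - P̂ v` with `P̂ v ⊥ range Û`, Pythagoras
reduces the claim to the Wedin bound `a := ‖P̂ U‖₂ ≤ ε₁`.

Complete `U` to a singular triple `X V = U S`, `Xᵀ U = V S` (with `V = Xᵀ U S⁻¹` and
`S ≥ σ := σ_k(X)`), and `Û` likewise for `X̂`. Put `e := ‖X̂ - X‖₂`. By Weyl,
`σ_k(X̂) ≥ σ - e > e ≥ σ_{k+1}(X̂)`, so `X̂ᵀ` maps `(range Û)ᗮ`, and `X̂` maps `(range V̂)ᗮ`, with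
norm at most `e`. Writing `U α = X V β` with `‖β‖ ≤ ‖α‖ / σ` and `X = X̂ - (X̂ - X)` gives
`a ≤ ε₀ (1 + b)` for `b := ‖(1 - V̂ V̂ᵀ) V‖₂`, transposing gives `b ≤ ε₀ (1 + a)`, and together
`a ≤ ε₀ / (1 - ε₀)`.
-/

open Matrix
open scoped Matrix.Norms.L2Operator

section

variable {m n k : ℕ}

lemma vnorm_eq_norm (v : Fin n → ℝ) :
    vnorm v = ‖(WithLp.toLp 2 v : EuclideanSpace ℝ (Fin n))‖ := by
  simp [vnorm, EuclideanSpace.norm_eq]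

lemma vnorm_nonneg (v : Fin n → ℝ) : 0 ≤ vnorm v := Real.sqrt_nonneg _

lemma vnorm_sq (v : Fin n → ℝ) : vnorm v ^ 2 = v ⬝ᵥ v := by
  rw [vnorm, Real.sq_sqrt (Finset.sum_nonneg fun i _ => sq_nonneg _), dotProduct]
  simp only [sq]

lemma vnorm_eq_zero {v : Fin n → ℝ} : vnorm v = 0 ↔ v = 0 := by
  simp [vnorm_eq_norm]

lemma vnorm_pos {v : Fin n → ℝ} (hv : v ≠ 0) : 0 < vnorm v :=
  (vnorm_nonneg v).lt_of_ne' (vnorm_eq_zero.not.mpr hv)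

lemma vnorm_smul (t : ℝ) (v : Fin n → ℝ) : vnorm (t • v) = |t| * vnorm v := by
  simp [vnorm_eq_norm, norm_smul]

lemma vnorm_neg (v : Fin n → ℝ) : vnorm (-v) = vnorm v := by
  simp [vnorm_eq_norm]

lemma vnorm_add_le (v w : Fin n → ℝ) : vnorm (v + w) ≤ vnorm v + vnorm w := by
  simpa [vnorm_eq_norm] using norm_add_le (WithLp.toLp 2 v : EuclideanSpace ℝ (Fin n)) _

lemma vnorm_sub_le (v w : Fin n → ℝ) : vnorm (v - w) ≤ vnorm v + vnorm w := by
  simpa [vnorm_eq_norm] using norm_sub_le (WithLp.toLp 2 v : EuclideanSpace ℝ (Fin n)) _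

lemma dotProduct_le_vnorm_mul (v w : Fin n → ℝ) : v ⬝ᵥ w ≤ vnorm v * vnorm w := by
  simpa [vnorm_eq_norm, EuclideanSpace.inner_toLp_toLp, mul_comm] using
    real_inner_le_norm (WithLp.toLp 2 w : EuclideanSpace ℝ (Fin n)) (WithLp.toLp 2 v)

lemma vnorm_mulVec_le_l2_opNorm (A : Matrix (Fin m) (Fin n) ℝ) (v : Fin n → ℝ) :
    vnorm (A *ᵥ v) ≤ ‖A‖ * vnorm v := by
  simpa [vnorm_eq_norm] using A.l2_opNorm_mulVec (WithLp.toLp 2 v)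

lemma vnorm_mulVec_le_of_transpose_mulVec_le {B : Matrix (Fin m) (Fin n) ℝ} {x : Fin n → ℝ}
    {e : ℝ} (he : 0 ≤ e) (h : vnorm (Bᵀ *ᵥ (B *ᵥ x)) ≤ e * vnorm (B *ᵥ x)) :
    vnorm (B *ᵥ x) ≤ e * vnorm x := by
  rcases eq_or_ne (B *ᵥ x) 0 with h0 | h0
  · rw [h0, vnorm_eq_zero.mpr rfl]
    exact mul_nonneg he (vnorm_nonneg x)
  refine le_of_mul_le_mul_left ?_ (vnorm_pos h0)
  calc vnorm (B *ᵥ x) * vnorm (B *ᵥ x) = x ⬝ᵥ (Bᵀ *ᵥ (B *ᵥ x)) := by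
        rw [← sq, vnorm_sq, dotProduct_transpose_mulVec, dotProduct_comm]
    _ ≤ vnorm x * (e * vnorm (B *ᵥ x)) :=
        (dotProduct_le_vnorm_mul _ _).trans (mul_le_mul_of_nonneg_left h (vnorm_nonneg x))
    _ = vnorm (B *ᵥ x) * (e * vnorm x) := by ring

section sval

variable {A : Matrix (Fin m) (Fin n) ℝ} {j : ℕ}

lemma sval_nonneg (A : Matrix (Fin m) (Fin n) ℝ) (j : ℕ) : 0 ≤ sval A j :=
  Real.sSup_nonneg fun _ hc => hc.1

lemma le_sval (hj : 0 < j) {c : ℝ} (hc : 0 ≤ c) (W : Submodule ℝ (Fin n → ℝ))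
    (hW : Module.finrank ℝ W = j) (hcW : ∀ v ∈ W, c * vnorm v ≤ vnorm (A *ᵥ v)) :
    c ≤ sval A j := by
  refine le_csSup ⟨‖A‖, ?_⟩ ⟨hc, W, hW, hcW⟩
  rintro c' ⟨-, W', hW', hcW'⟩
  obtain ⟨v, hvW, hv⟩ :=
    Submodule.exists_mem_ne_zero_of_ne_bot (Submodule.one_le_finrank_iff.mp (hW' ▸ hj))
  exact le_of_mul_le_mul_right ((hcW' v hvW).trans (vnorm_mulVec_le_l2_opNorm A v))
    (vnorm_pos hv)

lemma sval_le {b : ℝ} (hb : 0 ≤ b)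
    (h : ∀ c, 0 ≤ c → ∀ W : Submodule ℝ (Fin n → ℝ), Module.finrank ℝ W = j →
      (∀ v ∈ W, c * vnorm v ≤ vnorm (A *ᵥ v)) → c ≤ b) :
    sval A j ≤ b :=
  Real.sSup_le (fun _ ⟨hc, W, hW, hcW⟩ => h _ hc W hW hcW) hb

lemma vnorm_mulVec_le_sval_one (A : Matrix (Fin m) (Fin n) ℝ) (v : Fin n → ℝ) :
    vnorm (A *ᵥ v) ≤ sval A 1 * vnorm v := by
  rcases eq_or_ne v 0 with rfl | hv
  · simp [vnorm_eq_zero.mpr rfl]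
  have hv' := vnorm_pos hv
  have key : vnorm (A *ᵥ v) / vnorm v ≤ sval A 1 := by
    refine le_sval one_pos (div_nonneg (vnorm_nonneg _) hv'.le) _ (finrank_span_singleton hv)
      fun x hx => ?_
    obtain ⟨t, rfl⟩ := Submodule.mem_span_singleton.mp hx
    rw [mulVec_smul, vnorm_smul, vnorm_smul]
    field_simp
    rfl
  rwa [div_le_iff₀ hv'] at key

lemma sval_one_le {b : ℝ} (hb : 0 ≤ b) (h : ∀ v, vnorm (A *ᵥ v) ≤ b * vnorm v) :
    sval A 1 ≤ b := by
  refine sval_le hb fun c _ W hW hcW => ?_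
  obtain ⟨v, hvW, hv⟩ :=
    Submodule.exists_mem_ne_zero_of_ne_bot (Submodule.one_le_finrank_iff.mp hW.ge)
  exact le_of_mul_le_mul_right ((hcW v hvW).trans (h v)) (vnorm_pos hv)

lemma vnorm_transpose_mulVec_le_sval_one (A : Matrix (Fin m) (Fin n) ℝ) (u : Fin m → ℝ) :
    vnorm (Aᵀ *ᵥ u) ≤ sval A 1 * vnorm u :=
  vnorm_mulVec_le_of_transpose_mulVec_le (sval_nonneg A 1)
    (by simpa only [transpose_transpose] using vnorm_mulVec_le_sval_one A (Aᵀ *ᵥ u))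

lemma sval_sub_comm (A B : Matrix (Fin m) (Fin n) ℝ) : sval (A - B) 1 = sval (B - A) 1 := by
  have key : ∀ A B : Matrix (Fin m) (Fin n) ℝ, sval (A - B) 1 ≤ sval (B - A) 1 :=
    fun A B => sval_one_le (sval_nonneg _ _) fun v => by
      rw [← neg_sub, neg_mulVec, vnorm_neg]
      exact vnorm_mulVec_le_sval_one (B - A) v
  exact (key A B).antisymm (key B A)

lemma sval_le_sval_add_sval_sub (A B : Matrix (Fin m) (Fin n) ℝ) (hj : 0 < j) :
    sval A j ≤ sval B j + sval (A - B) 1 := by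
  set e := sval (A - B) 1
  refine sval_le (add_nonneg (sval_nonneg _ _) (sval_nonneg _ _)) fun c hc W hW hcW => ?_
  rcases le_total c e with hce | hce
  · linarith [sval_nonneg B j]
  suffices c - e ≤ sval B j by linarith
  refine le_sval hj (by linarith) W hW fun v hv => ?_
  have hA : A *ᵥ v = B *ᵥ v + (A - B) *ᵥ v := by rw [sub_mulVec, add_sub_cancel]
  have := hA ▸ vnorm_add_le (B *ᵥ v) ((A - B) *ᵥ v)
  linarith [hcW v hv, vnorm_mulVec_le_sval_one (A - B) v]

end sval

section rank

variable {A : Matrix (Fin m) (Fin n) ℝ}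

lemma sval_eq_zero_of_rank_lt {j : ℕ} (h : A.rank < j) : sval A j = 0 := by
  refine (sval_le le_rfl fun c hc W hW hcW => ?_).antisymm (sval_nonneg A j)
  by_contra! hc0
  have hinj : Function.Injective (A.mulVecLin.domRestrict W) := by
    rw [← LinearMap.ker_eq_bot, LinearMap.ker_eq_bot']
    intro v hv
    have := hcW v v.2
    rw [show A *ᵥ v = 0 from hv, vnorm_eq_zero.mpr rfl] at this
    exact Subtype.ext (vnorm_eq_zero.mp
      (le_antisymm (nonpos_of_mul_nonpos_right this hc0) (vnorm_nonneg _)))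
  have := LinearMap.finrank_range_of_inj hinj
  have := Submodule.finrank_mono (LinearMap.range_domRestrict_le_range A.mulVecLin W)
  change _ ≤ A.rank at this
  omega

lemma exists_pos_mul_vnorm_le_of_injOn (W : Submodule ℝ (Fin n → ℝ))
    (hinj : ∀ v ∈ W, A *ᵥ v = 0 → v = 0) :
    ∃ c > 0, ∀ v ∈ W, c * vnorm v ≤ vnorm (A *ᵥ v) := by
  let W' := W.comap (WithLp.linearEquiv 2 ℝ (Fin n → ℝ)).toLinearMap
  have hker : LinearMap.ker ((Matrix.toEuclideanLin A).domRestrict W') = ⊥ := by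
    rw [LinearMap.ker_eq_bot']
    intro x hx
    exact Subtype.ext (congrArg (WithLp.toLp 2) (hinj _ x.2 (congrArg WithLp.ofLp hx)))
  obtain ⟨K, hK, hanti⟩ := LinearMap.exists_antilipschitzWith _ hker
  refine ⟨(K : ℝ)⁻¹, by positivity, fun v hv => ?_⟩
  have := hanti.le_mul_dist ⟨WithLp.toLp 2 v, hv⟩ 0
  rw [map_zero, dist_zero_right, dist_zero_right] at this
  rw [inv_mul_le_iff₀ (by positivity), vnorm_eq_norm, vnorm_eq_norm]
  exact this

lemma sval_rank_pos (hA : 0 < A.rank) : 0 < sval A A.rank := by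
  obtain ⟨c, hc, hcW⟩ := exists_pos_mul_vnorm_le_of_injOn (LinearMap.range Aᵀ.mulVecLin)
    fun v ⟨u, hu⟩ hv => by
      rw [← vnorm_eq_zero, ← sq_eq_zero_iff, vnorm_sq]
      calc v ⬝ᵥ v = v ⬝ᵥ (Aᵀ *ᵥ u) := by rw [← hu]; rfl
        _ = 0 := by rw [dotProduct_transpose_mulVec, hv, dotProduct_zero]
  exact hc.trans_le (le_sval hA hc.le _ (A.rank_transpose) hcW)

end rank

lemma mul_vnorm_le_vnorm_diagonal_mulVec {s : Fin k → ℝ} {c : ℝ} (hc : 0 ≤ c)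
    (hcs : ∀ j, c ≤ s j) (b : Fin k → ℝ) : c * vnorm b ≤ vnorm (diagonal s *ᵥ b) := by
  calc c * vnorm b = vnorm (c • b) := by rw [vnorm_smul, abs_of_nonneg hc]
    _ ≤ _ := Real.sqrt_le_sqrt <| Finset.sum_le_sum fun j _ => by
      rw [Pi.smul_apply, mulVec_diagonal, smul_eq_mul, mul_pow, mul_pow]
      gcongr
      exact hcs j

lemma dotProduct_mulVec_eq_zero_of_perp {Q : Matrix (Fin m) (Fin k) ℝ} {z : Fin m → ℝ}
    (hz : Qᵀ *ᵥ z = 0) (a : Fin k → ℝ) : z ⬝ᵥ (Q *ᵥ a) = 0 := by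
  rw [← dotProduct_transpose_mulVec, hz, dotProduct_zero]

section orthonormal

variable {Q : Matrix (Fin m) (Fin k) ℝ} (hQ : Qᵀ * Q = 1)
include hQ

lemma vnorm_mulVec_add_sq {z : Fin m → ℝ} (hz : Qᵀ *ᵥ z = 0) (a : Fin k → ℝ) :
    vnorm (Q *ᵥ a + z) ^ 2 = vnorm a ^ 2 + vnorm z ^ 2 := by
  have hQa : (Q *ᵥ a) ⬝ᵥ (Q *ᵥ a) = a ⬝ᵥ a := by
    rw [← dotProduct_transpose_mulVec, mulVec_mulVec, hQ, one_mulVec]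
  rw [vnorm_sq, vnorm_sq, vnorm_sq, add_dotProduct, dotProduct_add, dotProduct_add, hQa,
    dotProduct_mulVec_eq_zero_of_perp hz, dotProduct_comm (Q *ᵥ a),
    dotProduct_mulVec_eq_zero_of_perp hz]
  ring

lemma vnorm_mulVec (a : Fin k → ℝ) : vnorm (Q *ᵥ a) = vnorm a := by
  have := vnorm_mulVec_add_sq hQ (mulVec_zero Qᵀ) a
  rw [add_zero, vnorm_eq_zero.mpr rfl] at this
  exact (pow_left_inj₀ (vnorm_nonneg _) (vnorm_nonneg _) two_ne_zero).mp (by simpa using this)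

lemma transpose_mul_one_sub_mul_transpose : Qᵀ * (1 - Q * Qᵀ) = 0 := by
  rw [Matrix.mul_sub, Matrix.mul_one, ← Matrix.mul_assoc, hQ, Matrix.one_mul, sub_self]

lemma one_sub_mul_transpose_mul : (1 - Q * Qᵀ) * Q = 0 := by
  rw [Matrix.sub_mul, Matrix.one_mul, Matrix.mul_assoc, hQ, Matrix.mul_one, sub_self]

lemma vnorm_one_sub_mul_transpose_mulVec_le (x : Fin m → ℝ) :
    vnorm ((1 - Q * Qᵀ) *ᵥ x) ≤ vnorm x := by
  have hx : x = Q *ᵥ (Qᵀ *ᵥ x) + (1 - Q * Qᵀ) *ᵥ x := by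
    rw [mulVec_mulVec, ← add_mulVec, add_sub_cancel, one_mulVec]
  have hperp : Qᵀ *ᵥ ((1 - Q * Qᵀ) *ᵥ x) = 0 := by
    rw [mulVec_mulVec, transpose_mul_one_sub_mul_transpose hQ, zero_mulVec]
  have := vnorm_mulVec_add_sq hQ hperp (Qᵀ *ᵥ x)
  rw [← hx] at this
  exact (pow_le_pow_iff_left₀ (vnorm_nonneg _) (vnorm_nonneg _) two_ne_zero).mp
    (by nlinarith [sq_nonneg (vnorm (Qᵀ *ᵥ x))])

end orthonormal

structure IsSingularTriple (A : Matrix (Fin m) (Fin n) ℝ) (Q : Matrix (Fin m) (Fin k) ℝ)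
    (R : Matrix (Fin n) (Fin k) ℝ) (s : Fin k → ℝ) : Prop where
  orthonormal_left : Qᵀ * Q = 1
  orthonormal_right : Rᵀ * R = 1
  mul_right : A * R = Q * diagonal s
  transpose_mul_left : Aᵀ * Q = R * diagonal s

namespace IsSingularTriple

variable {A : Matrix (Fin m) (Fin n) ℝ} {Q : Matrix (Fin m) (Fin k) ℝ}
  {R : Matrix (Fin n) (Fin k) ℝ} {s : Fin k → ℝ}

lemma transpose (h : IsSingularTriple A Q R s) : IsSingularTriple Aᵀ R Q s :=
  ⟨h.orthonormal_right, h.orthonormal_left, h.transpose_mul_left,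
    by rw [transpose_transpose]; exact h.mul_right⟩

lemma mulVec_mulVec_right (h : IsSingularTriple A Q R s) (b : Fin k → ℝ) :
    A *ᵥ (R *ᵥ b) = Q *ᵥ (diagonal s *ᵥ b) := by
  rw [mulVec_mulVec, h.mul_right, mulVec_mulVec]

lemma transpose_mulVec_transpose_mulVec (h : IsSingularTriple A Q R s) {u : Fin m → ℝ}
    (hu : Qᵀ *ᵥ u = 0) : Rᵀ *ᵥ (Aᵀ *ᵥ u) = 0 := by
  rw [mulVec_mulVec, ← transpose_mul, h.mul_right, transpose_mul, diagonal_transpose,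
    ← mulVec_mulVec, hu, mulVec_zero]

lemma le_sval_succ (h : IsSingularTriple A Q R s) {y : Fin n → ℝ} (hy : Rᵀ *ᵥ y = 0)
    (hy0 : y ≠ 0) (hAy : Qᵀ *ᵥ (A *ᵥ y) = 0) {c : ℝ} (hc : 0 ≤ c) (hcs : ∀ j, c ≤ s j)
    (hcy : c * vnorm y ≤ vnorm (A *ᵥ y)) : c ≤ sval A (k + 1) := by
  let L := R.mulVecLin.coprod (LinearMap.toSpanSingleton ℝ _ y)
  have hL : ∀ p, L p = R *ᵥ p.1 + p.2 • y := fun _ => rfl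
  have hperp : ∀ t : ℝ, Rᵀ *ᵥ (t • y) = 0 := fun t => by rw [mulVec_smul, hy, smul_zero]
  have hLnorm : ∀ p, vnorm (L p) ^ 2 = vnorm p.1 ^ 2 + (p.2 * vnorm y) ^ 2 := fun p => by
    rw [hL, vnorm_mulVec_add_sq h.orthonormal_right (hperp p.2), vnorm_smul, mul_pow, sq_abs,
      mul_pow]
  have hinj : Function.Injective L := by
    rw [← LinearMap.ker_eq_bot, LinearMap.ker_eq_bot']
    intro p hp
    have h0 := hLnorm p
    rw [hp, vnorm_eq_zero.mpr rfl] at h0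
    have h1 : vnorm p.1 = 0 := by nlinarith [sq_nonneg (vnorm p.1), sq_nonneg (p.2 * vnorm y)]
    have h2 : p.2 * vnorm y = 0 := by nlinarith [sq_nonneg (vnorm p.1), sq_nonneg (p.2 * vnorm y)]
    exact Prod.ext (vnorm_eq_zero.mp h1)
      ((mul_eq_zero.mp h2).resolve_right (vnorm_pos hy0).ne')
  refine le_sval (Nat.succ_pos k) hc (LinearMap.range L) ?_ ?_
  · rw [LinearMap.finrank_range_of_inj hinj]
    simp
  rintro _ ⟨p, rfl⟩
  have hAt : Qᵀ *ᵥ (p.2 • (A *ᵥ y)) = 0 := by rw [mulVec_smul, hAy, smul_zero]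
  have hAL : A *ᵥ L p = Q *ᵥ (diagonal s *ᵥ p.1) + p.2 • (A *ᵥ y) := by
    rw [hL, mulVec_add, h.mulVec_mulVec_right, mulVec_smul]
  have h1 := mul_vnorm_le_vnorm_diagonal_mulVec hc hcs p.1
  have hsq : (c * vnorm (L p)) ^ 2 ≤ vnorm (A *ᵥ L p) ^ 2 := by
    rw [hAL, vnorm_mulVec_add_sq h.orthonormal_left hAt, vnorm_smul, mul_pow c, hLnorm]
    nlinarith [pow_le_pow_left₀ (mul_nonneg hc (vnorm_nonneg _)) h1 2,
      pow_le_pow_left₀ (mul_nonneg hc (vnorm_nonneg _)) hcy 2, sq_nonneg p.2, sq_abs p.2]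
  exact (pow_le_pow_iff_left₀ (mul_nonneg hc (vnorm_nonneg _)) (vnorm_nonneg _)
    two_ne_zero).mp hsq

lemma vnorm_transpose_mulVec_le_of_perp (h : IsSingularTriple A Q R s) {t e : ℝ}
    (hts : ∀ j, t ≤ s j) (het : e < t) (hsv : sval A (k + 1) ≤ e) {u : Fin m → ℝ}
    (hu : Qᵀ *ᵥ u = 0) : vnorm (Aᵀ *ᵥ u) ≤ e * vnorm u := by
  set y := Aᵀ *ᵥ u
  have he : 0 ≤ e := (sval_nonneg A _).trans hsv
  by_contra! hlt
  have hu0 : u ≠ 0 := by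
    rintro rfl
    simp [y, vnorm_eq_zero.mpr rfl] at hlt
  have hy0 : y ≠ 0 := fun h0 => by
    rw [h0, vnorm_eq_zero.mpr rfl] at hlt
    exact (mul_nonneg he (vnorm_nonneg u)).not_gt hlt
  have hu' := vnorm_pos hu0
  have hy' := vnorm_pos hy0
  set r := vnorm y / vnorm u
  have hr : e < r := by rwa [lt_div_iff₀ hu']
  have hry : r * vnorm y ≤ vnorm (A *ᵥ y) := by
    rw [div_mul_eq_mul_div, div_le_iff₀ hu', ← sq, vnorm_sq, mul_comm]
    calc y ⬝ᵥ y = u ⬝ᵥ (A *ᵥ y) := dotProduct_transpose_mulVec A y u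
      _ ≤ _ := dotProduct_le_vnorm_mul u _
  have hAy : Qᵀ *ᵥ (A *ᵥ y) = 0 := by
    simpa only [transpose_transpose] using h.transpose.transpose_mulVec_transpose_mulVec
      (h.transpose_mulVec_transpose_mulVec hu)
  -- `range R ⊕ span {y}` witnesses `σ_{k+1}(A) ≥ min t r > e`.
  have := h.le_sval_succ (h.transpose_mulVec_transpose_mulVec hu) hy0 hAy
    (le_min (he.trans het.le) (he.trans hr.le)) (fun j => (min_le_left t r).trans (hts j))
    ((mul_le_mul_of_nonneg_right (min_le_right t r) hy'.le).trans hry)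
  exact (lt_min het hr).not_ge (this.trans hsv)

lemma vnorm_mulVec_le_of_perp (h : IsSingularTriple A Q R s) {t e : ℝ}
    (hts : ∀ j, t ≤ s j) (het : e < t) (hsv : sval A (k + 1) ≤ e) {z : Fin n → ℝ}
    (hz : Rᵀ *ᵥ z = 0) : vnorm (A *ᵥ z) ≤ e * vnorm z := by
  have hAz : Qᵀ *ᵥ (A *ᵥ z) = 0 := by
    simpa using h.transpose.transpose_mulVec_transpose_mulVec hz
  exact vnorm_mulVec_le_of_transpose_mulVec_le ((sval_nonneg A _).trans hsv)
    (h.vnorm_transpose_mulVec_le_of_perp hts het hsv hAz)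

end IsSingularTriple

lemma isSingularTriple_of_eigen {A : Matrix (Fin m) (Fin n) ℝ} {Q : Matrix (Fin m) (Fin k) ℝ}
    {D : Fin k → ℝ} (hQ : Qᵀ * Q = 1) (hAQ : A * Aᵀ * Q = Q * diagonal D) (hD : ∀ j, 0 < D j) :
    IsSingularTriple A Q (Aᵀ * Q * diagonal fun j => (√(D j))⁻¹) fun j => √(D j) := by
  have hsq : ∀ j, √(D j) * √(D j) = D j := fun j => Real.mul_self_sqrt (hD j).le
  have hne : ∀ j, √(D j) ≠ 0 := fun j => (Real.sqrt_pos.mpr (hD j)).ne'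
  have hinv : diagonal (fun j => (√(D j))⁻¹) * diagonal (fun j => √(D j)) = 1 := by
    rw [diagonal_mul_diagonal, ← diagonal_one]
    exact congrArg diagonal (funext fun j => inv_mul_cancel₀ (hne j))
  have hDinv : diagonal D * diagonal (fun j => (√(D j))⁻¹) = diagonal fun j => √(D j) := by
    rw [diagonal_mul_diagonal]
    exact congrArg diagonal (funext fun j => by rw [mul_inv_eq_iff_eq_mul₀ (hne j), hsq])
  refine ⟨hQ, ?_, ?_, ?_⟩
  · rw [transpose_mul, transpose_mul, transpose_transpose, diagonal_transpose]
    calc _ = diagonal (fun j => (√(D j))⁻¹) * (Qᵀ * (A * Aᵀ * Q)) *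
          diagonal (fun j => (√(D j))⁻¹) := by simp only [Matrix.mul_assoc]
      _ = 1 := by
        rw [hAQ, ← Matrix.mul_assoc Qᵀ, hQ, Matrix.one_mul, Matrix.mul_assoc, hDinv,
          diagonal_mul_diagonal, ← diagonal_one]
        exact congrArg diagonal (funext fun j => inv_mul_cancel₀ (hne j))
  · rw [← Matrix.mul_assoc, ← Matrix.mul_assoc, hAQ, Matrix.mul_assoc, hDinv]
  · rw [Matrix.mul_assoc, hinv, Matrix.mul_one]

lemma IsTopSingular.exists_isSingularTriple {A : Matrix (Fin m) (Fin n) ℝ}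
    {Q : Matrix (Fin m) (Fin k) ℝ} (h : IsTopSingular A Q) (hA : 0 < sval A k) :
    ∃ R s, IsSingularTriple A Q R s ∧ ∀ j, sval A k ≤ s j := by
  obtain ⟨hQ, D, hAQ, hD⟩ := h
  refine ⟨_, _, isSingularTriple_of_eigen hQ hAQ fun j => (pow_pos hA 2).trans_le (hD j),
    fun j => Real.le_sqrt_of_sq_le (hD j)⟩

/-- `‖sin Θ(Q, Q')‖₂` for matrices `Q`, `Q'` with orthonormal columns. -/
noncomputable def sinTheta (Q Q' : Matrix (Fin m) (Fin k) ℝ) : ℝ :=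
  sval ((1 - Q' * Q'ᵀ) * Q) 1

lemma sinTheta_nonneg (Q Q' : Matrix (Fin m) (Fin k) ℝ) : 0 ≤ sinTheta Q Q' :=
  sval_nonneg _ _

/-- Write `Q α = A (R β)` with `‖β‖ ≤ ‖α‖ / σ`: `A'` maps the component of `R β` along `range R'`
into `range Q'`, where `1 - Q' Q'ᵀ` kills it. -/
lemma sinTheta_le {A A' : Matrix (Fin m) (Fin n) ℝ} {Q Q' : Matrix (Fin m) (Fin k) ℝ}
    {R R' : Matrix (Fin n) (Fin k) ℝ} {s s' : Fin k → ℝ} {σ e : ℝ}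
    (h : IsSingularTriple A Q R s) (hσ : 0 < σ) (hσs : ∀ j, σ ≤ s j)
    (h' : IsSingularTriple A' Q' R' s') (he : 0 ≤ e)
    (hperp : ∀ z, R'ᵀ *ᵥ z = 0 → vnorm (A' *ᵥ z) ≤ e * vnorm z)
    (hAA' : ∀ w, vnorm ((A' - A) *ᵥ w) ≤ e * vnorm w) :
    sinTheta Q Q' ≤ e / σ * (1 + sinTheta R R') := by
  set b := sinTheta R R'
  set P := 1 - Q' * Q'ᵀ
  have hb : 0 ≤ 1 + b := by linarith [sinTheta_nonneg R R']
  refine sval_one_le (mul_nonneg (div_nonneg he hσ.le) hb) fun α => ?_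
  set β := diagonal (fun j => (s j)⁻¹) *ᵥ α
  have hsβ : diagonal s *ᵥ β = α := funext fun j => by
    simp only [β, mulVec_diagonal]
    exact mul_inv_cancel_left₀ (hσ.trans_le (hσs j)).ne' _
  have hβ : σ * vnorm β ≤ vnorm α := hsβ ▸ mul_vnorm_le_vnorm_diagonal_mulVec hσ.le hσs β
  set w := R *ᵥ β
  set z := (1 - R' * R'ᵀ) *ᵥ w
  have hz : R'ᵀ *ᵥ z = 0 := by
    rw [mulVec_mulVec, transpose_mul_one_sub_mul_transpose h'.orthonormal_right, zero_mulVec]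
  have hzβ : vnorm z ≤ b * vnorm β := by
    rw [show z = ((1 - R' * R'ᵀ) * R) *ᵥ β from mulVec_mulVec β _ R]
    exact vnorm_mulVec_le_sval_one _ β
  have hw : w = z + R' *ᵥ (R'ᵀ *ᵥ w) := by
    simp only [z, sub_mulVec, one_mulVec, mulVec_mulVec]
    abel
  have hPQ' : ∀ x, P *ᵥ (Q' *ᵥ x) = 0 := fun x => by
    rw [mulVec_mulVec, one_sub_mul_transpose_mul h'.orthonormal_left, zero_mulVec]
  have hdecomp : P *ᵥ (Q *ᵥ α) = P *ᵥ (A' *ᵥ z) - P *ᵥ ((A' - A) *ᵥ w) := by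
    have hQα : Q *ᵥ α = A' *ᵥ w - (A' - A) *ᵥ w := by
      rw [← hsβ, ← h.mulVec_mulVec_right, sub_mulVec, sub_sub_cancel]
    have hA'w : A' *ᵥ w = A' *ᵥ z + Q' *ᵥ (diagonal s' *ᵥ (R'ᵀ *ᵥ w)) := by
      conv_lhs => rw [hw]
      rw [mulVec_add, h'.mulVec_mulVec_right]
    rw [hQα, mulVec_sub, hA'w, mulVec_add, hPQ', add_zero]
  have hP := vnorm_one_sub_mul_transpose_mulVec_le h'.orthonormal_left
  rw [← mulVec_mulVec, hdecomp]
  calc _ ≤ vnorm (A' *ᵥ z) + vnorm ((A' - A) *ᵥ w) :=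
        (vnorm_sub_le _ _).trans (add_le_add (hP _) (hP _))
    _ ≤ e * (b * vnorm β) + e * vnorm β := by
        gcongr
        · exact (hperp z hz).trans (mul_le_mul_of_nonneg_left hzβ he)
        · exact (hAA' w).trans_eq (by rw [vnorm_mulVec h.orthonormal_right])
    _ = e * (1 + b) * vnorm β := by ring
    _ ≤ e * (1 + b) * (vnorm α / σ) :=
        mul_le_mul_of_nonneg_left (by rwa [le_div_iff₀ hσ, mul_comm]) (mul_nonneg he hb)
    _ = e / σ * (1 + b) * vnorm α := by ring

theorem sinTheta_le_of_isTopSingular {X Xh : Matrix (Fin m) (Fin n) ℝ}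
    {U Uh : Matrix (Fin m) (Fin k) ℝ} (hk : 0 < k) (hrank : X.rank = k)
    (hU : IsTopSingular X U) (hUh : IsTopSingular Xh Uh) {ε0 : ℝ}
    (hε0 : ε0 = sval (Xh - X) 1 / sval X k) (hε0lt : ε0 < 1 / 2) :
    sinTheta U Uh ≤ ε0 / (1 - ε0) := by
  set σ := sval X k
  set e := sval (Xh - X) 1
  have hσ : 0 < σ := by
    have := sval_rank_pos (A := X) (by omega)
    rwa [hrank] at this
  have he : 0 ≤ e := sval_nonneg _ _
  have hε0nn : 0 ≤ ε0 := hε0 ▸ div_nonneg he hσ.le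
  have hgap : e < σ - e := by
    rw [hε0, div_lt_iff₀ hσ] at hε0lt
    linarith
  have hσh : σ - e ≤ sval Xh k := by
    have := sval_le_sval_add_sval_sub X Xh hk
    rw [sval_sub_comm] at this
    linarith
  have hsucc : sval Xh (k + 1) ≤ e := by
    have := sval_le_sval_add_sval_sub Xh X k.succ_pos
    rwa [sval_eq_zero_of_rank_lt (A := X) (by omega), zero_add] at this
  obtain ⟨V, s, hX, hs⟩ := IsTopSingular.exists_isSingularTriple hU hσ
  obtain ⟨Vh, sh, hXh, hsh⟩ := IsTopSingular.exists_isSingularTriple hUh (by linarith)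
  have hsh' : ∀ j, σ - e ≤ sh j := fun j => hσh.trans (hsh j)
  have ha := sinTheta_le hX hσ hs hXh he
    (fun z hz => hXh.vnorm_mulVec_le_of_perp hsh' hgap hsucc hz)
    (vnorm_mulVec_le_sval_one _)
  have hb := sinTheta_le hX.transpose hσ hs hXh.transpose he
    (fun u hu => hXh.vnorm_transpose_mulVec_le_of_perp hsh' hgap hsucc hu)
    (fun u => by
      rw [← transpose_sub]
      exact vnorm_transpose_mulVec_le_sval_one _ u)
  rw [← hε0] at ha hb
  have := sinTheta_nonneg U Uh
  rw [le_div_iff₀ (by linarith)]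
  nlinarith [mul_le_mul_of_nonneg_left hb hε0nn]

end

/-- (Lemma "matrix-perturb" (6).) Under the top-`k` singular subspace
perturbation setting with `ε₀ := ‖X̂−X‖₂/σ_k(X) < 1/2` and `ε₁ := ε₀/(1−ε₀)`: for any
`α̂ ∈ ℝ^k` and any `v ∈ range(U)`,
`‖Û α̂ − v‖₂² ≤ ‖α̂ − Ûᵀ v‖₂² + ‖v‖₂² ε₁²`. -/
theorem stmt_9 {m n k : ℕ} (hk : 0 < k) (X Xh : Matrix (Fin m) (Fin n) ℝ)
    (hrank : X.rank = k)
    (U Uh : Matrix (Fin m) (Fin k) ℝ)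
    (hU : IsTopSingular X U) (hUh : IsTopSingular Xh Uh)
    (ε0 ε1 : ℝ)
    (hε0 : ε0 = sval (Xh - X) 1 / sval X k)
    (hε0lt : ε0 < 1 / 2)
    (hε1 : ε1 = ε0 / (1 - ε0)) :
    ∀ (αh : Fin k → ℝ) (v : Fin m → ℝ), (∃ α : Fin k → ℝ, v = U.mulVec α) →
      vnorm (Uh.mulVec αh - v) ^ 2
        ≤ vnorm (αh - Uh.transpose.mulVec v) ^ 2 + vnorm v ^ 2 * ε1 ^ 2 := by
  rintro αh _ ⟨α, rfl⟩
  have hsin := sinTheta_le_of_isTopSingular hk hrank hU hUh hε0 hε0lt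
  rw [← hε1] at hsin
  set P := 1 - Uh * Uhᵀ
  have hdecomp : Uh *ᵥ αh - U *ᵥ α = Uh *ᵥ (αh - Uhᵀ *ᵥ (U *ᵥ α)) + -(P *ᵥ (U *ᵥ α)) := by
    rw [show P *ᵥ (U *ᵥ α) = U *ᵥ α - Uh *ᵥ (Uhᵀ *ᵥ (U *ᵥ α)) by
      rw [sub_mulVec, one_mulVec, ← mulVec_mulVec], mulVec_sub]
    abel
  have hperp : Uhᵀ *ᵥ -(P *ᵥ (U *ᵥ α)) = 0 := by
    rw [mulVec_neg, mulVec_mulVec, transpose_mul_one_sub_mul_transpose hUh.1, zero_mulVec,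
      neg_zero]
  have hP : vnorm (P *ᵥ (U *ᵥ α)) ≤ ε1 * vnorm (U *ᵥ α) := by
    rw [mulVec_mulVec, vnorm_mulVec hU.1]
    exact (vnorm_mulVec_le_sval_one _ α).trans (mul_le_mul_of_nonneg_right hsin (vnorm_nonneg α))
  rw [hdecomp, vnorm_mulVec_add_sq hUh.1 hperp, vnorm_neg]
  have := pow_le_pow_left₀ (vnorm_nonneg _) hP 2
  rw [mul_pow] at this
  linarith
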